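/- The digraph D_5 and each of the three digraphs in L_1 is a strong digraph of order 5 in which every vertex has out-degree at least 2 and in-degree at least 2 (so every vertex is a T-vertex with m = 2), and each contains a cycle of length 4; yet none of these four digraphs contains a Hamiltonian cycle. -/

import Mathlib

/-!
Basic framework: finite loopless digraphs (arcs may exist in both directions),
degrees, adjacency, directed cycles (as injective maps from `ZMod k` respecting
arcs), strong and 2-strong connectivity, T-vertices, and the special digraphs
`D₅`, `D₇`, the classes `L₁`, `L₂`, etc. from the paper
"On Cycles through Vertices of Large Semidegree in Digraphs".
-/

/-- A digraph: a loopless arc relation (arcs `u → v`; both `uv` and `vu` allowed). -/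
structure Dgr (V : Type*) where
  Arc : V → V → Prop
  loopless : ∀ v, ¬ Arc v v

namespace Dgr

variable {V : Type*}

/-- Two vertices are adjacent if there is an arc between them in some direction. -/
def Adj (D : Dgr V) (u v : V) : Prop := D.Arc u v ∨ D.Arc v u

/-- Out-degree `d⁺(u)`. -/
noncomputable def outDeg (D : Dgr V) (u : V) : ℕ := {v | D.Arc u v}.ncard

/-- In-degree `d⁻(u)`. -/
noncomputable def inDeg (D : Dgr V) (u : V) : ℕ := {v | D.Arc v u}.ncard

/-- Degree `d(u) = d⁺(u) + d⁻(u)`. -/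
noncomputable def deg (D : Dgr V) (u : V) : ℕ := D.outDeg u + D.inDeg u

/-- `d⁺(u, A)`: number of out-neighbours of `u` in `A`. -/
noncomputable def outDegOn (D : Dgr V) (u : V) (A : Set V) : ℕ := {v ∈ A | D.Arc u v}.ncard

/-- `d⁻(u, A)`: number of in-neighbours of `u` in `A`. -/
noncomputable def inDegOn (D : Dgr V) (u : V) (A : Set V) : ℕ := {v ∈ A | D.Arc v u}.ncard

/-- `d(u, A) = d⁺(u, A) + d⁻(u, A)`. -/
noncomputable def degOn (D : Dgr V) (u : V) (A : Set V) : ℕ := D.outDegOn u A + D.inDegOn u A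

/-- In a digraph of order `2m+1`, a `T`-vertex is one with `d⁺(u) ≥ m` and `d⁻(u) ≥ m`. -/
def TVertex (D : Dgr V) (m : ℕ) (u : V) : Prop := m ≤ D.outDeg u ∧ m ≤ D.inDeg u

/-- A directed cycle of length `k ≥ 2`, given as an injective map `c : ZMod k → V`
with an arc from each `c i` to `c (i+1)`. -/
def IsCycle (D : Dgr V) {k : ℕ} (c : ZMod k → V) : Prop :=
  2 ≤ k ∧ Function.Injective c ∧ ∀ i, D.Arc (c i) (c (i + 1))

/-- `D` has a (directed) cycle through all vertices of `S`. -/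
def CycleThrough (D : Dgr V) (S : Set V) : Prop :=
  ∃ (k : ℕ) (c : ZMod k → V), D.IsCycle c ∧ S ⊆ Set.range c

/-- A Hamiltonian cycle: a cycle through all the vertices. -/
def Hamiltonian (D : Dgr V) [Fintype V] : Prop :=
  ∃ c : ZMod (Fintype.card V) → V, D.IsCycle c ∧ Function.Surjective c

/-- `D` is strong: a directed path (walk) from `u` to `v` for every pair of
distinct vertices. -/
def Strong (D : Dgr V) : Prop :=
  ∀ u v : V, u ≠ v → Relation.TransGen D.Arc u v

/-- The induced subdigraph on a set `S` of vertices. -/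
def restrict (D : Dgr V) (S : Set V) : Dgr S where
  Arc a b := D.Arc a b
  loopless v := D.loopless v

/-- `D` is 2-strong: at least 3 vertices, and deleting any single vertex leaves
a strong digraph. -/
def TwoStrong (D : Dgr V) [Fintype V] : Prop :=
  3 ≤ Fintype.card V ∧ ∀ w : V, (D.restrict {v | v ≠ w}).Strong

/-- Isomorphism of digraphs. -/
def Iso (D : Dgr V) {W : Type*} (E : Dgr W) : Prop :=
  ∃ e : V ≃ W, ∀ a b : V, D.Arc a b ↔ E.Arc (e a) (e b)

end Dgr

/-- A digraph defined by a list of arcs. -/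
def ofList {V : Type*} [DecidableEq V] (l : List (V × V)) (h : ∀ v : V, (v, v) ∉ l) :
    Dgr V where
  Arc a b := (a, b) ∈ l
  loopless v hv := h v hv

/-- Arcs of the digraph `D₅` (vertices `x₁,x₂,x₃ = 0,1,2`, `x = 3`, `y = 4`):
`N⁺(x₁)={x₂,y}`, `N⁺(x₂)={x₃,x}`, `N⁺(x₃)={x,y}`, `N⁺(x)={x₁,x₂}`, `N⁺(y)={x₁,x₃}`. -/
def D5arcs : List (Fin 5 × Fin 5) :=
  [(0,1),(0,4),(1,2),(1,3),(2,3),(2,4),(3,0),(3,1),(4,0),(4,2)]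

/-- The digraph `D₅`. -/
def D5 : Dgr (Fin 5) := ofList D5arcs (by decide)

/-- `L₁`: the three digraphs obtained from `D₅` by adding the arc `x₁x₃`, the arc
`x₃x₁`, or both. -/
def L1 : Set (Dgr (Fin 5)) :=
  {ofList ((0,2) :: D5arcs) (by decide),
   ofList ((2,0) :: D5arcs) (by decide),
   ofList ((0,2) :: (2,0) :: D5arcs) (by decide)}

/-- Arcs of the digraph `D₇` (vertices `x₁,…,x₅ = 0,…,4`, `x = 5`, `y = 6`):
`N⁺(x₁)={x₂,x₅,y}`, `N⁺(x₂)={x₃,x₄,y}`, `N⁺(x₃)={x₂,x₄,x}`, `N⁺(x₄)={x₃,x₅,x}`,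
`N⁺(x₅)={x₁,x,y}`, `N⁺(x)={x₁,x₂,x₃}`, `N⁺(y)={x₁,x₄,x₅}`. -/
def D7arcs : List (Fin 7 × Fin 7) :=
  [(0,1),(0,4),(0,6),(1,2),(1,3),(1,6),(2,1),(2,3),(2,5),(3,2),(3,4),(3,5),
   (4,0),(4,5),(4,6),(5,0),(5,1),(5,2),(6,0),(6,3),(6,4)]

/-- The digraph `D₇`. -/
def D7 : Dgr (Fin 7) := ofList D7arcs (by decide)

/-- Membership in the class `L₂`: there is an enumeration `x_1,…,x_{2m}, x` of the
vertices (here `b i = x_i`, indices mod `2m`, so `b 0 = x_{2m}`) such that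
`x_1x_2⋯x_{2m}x_1` is a cycle, `x` and `x_{2m}` are nonadjacent,
`N⁺(x) = N⁺(x_{2m}) = {x_1,…,x_m}`, `N⁻(x) = N⁻(x_{2m}) = {x_m,…,x_{2m-1}}`,
and there is no arc from `{x_1,…,x_{m-1}}` to `{x_{m+1},…,x_{2m-1}}`. -/
def InL2 {V : Type*} (D : Dgr V) (m : ℕ) : Prop :=
  ∃ (b : ZMod (2 * m) → V) (x : V),
    1 ≤ m ∧
    Function.Injective b ∧ x ∉ Set.range b ∧
    (∀ i, D.Arc (b i) (b (i + 1))) ∧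
    ¬ D.Adj x (b 0) ∧
    {v | D.Arc x v} = (fun i : ℕ => b i) '' Set.Icc 1 m ∧
    {v | D.Arc (b 0) v} = (fun i : ℕ => b i) '' Set.Icc 1 m ∧
    {v | D.Arc v x} = (fun i : ℕ => b i) '' Set.Icc m (2 * m - 1) ∧
    {v | D.Arc v (b 0)} = (fun i : ℕ => b i) '' Set.Icc m (2 * m - 1) ∧
    (∀ i ∈ Set.Icc 1 (m - 1), ∀ j ∈ Set.Icc (m + 1) (2 * m - 1),
      ¬ D.Arc (b (i : ℕ)) (b (j : ℕ)))

/-- `K*_{m,m+1} ⊆ D ⊆ [K_m + K̄_{m+1}]*` (containments as spanning subdigraphs):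
the vertex set splits into `A` of size `m` and its complement of size `m+1`, all arcs
between `A` and `Aᶜ` are present in both directions, and there are no arcs inside `Aᶜ`. -/
def KSandwich {V : Type*} (D : Dgr V) (m : ℕ) : Prop :=
  ∃ A : Set V, A.ncard = m ∧ Aᶜ.ncard = m + 1 ∧
    (∀ a ∈ A, ∀ b ∈ Aᶜ, D.Arc a b ∧ D.Arc b a) ∧
    (∀ u ∈ Aᶜ, ∀ v ∈ Aᶜ, ¬ D.Arc u v)

/-- Alternative (iv) of Theorem 2: `D` has a cycle `C = z_1 z_2 ⋯ z_{2m} z_1` of length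
`2m` such that, with `z` the vertex off the cycle, at least `3` vertices of the cycle
are nonadjacent to `z`, and every cycle vertex `z_l` nonadjacent to `z` satisfies
`z_{l-1}z, z z_{l+1} ∈ A(D)`, `N⁺(z) = N⁺(z_l)` and `N⁻(z) = N⁻(z_l)`; in particular
these vertices together with `z` form an independent set. -/
def PropIV {V : Type*} (D : Dgr V) (m : ℕ) : Prop :=
  ∃ (c : ZMod (2 * m) → V) (z : V),
    D.IsCycle c ∧ z ∉ Set.range c ∧
    3 ≤ {i : ZMod (2 * m) | ¬ D.Adj z (c i)}.ncard ∧
    (∀ i : ZMod (2 * m), ¬ D.Adj z (c i) →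
      D.Arc (c (i - 1)) z ∧ D.Arc z (c (i + 1)) ∧
      {v | D.Arc z v} = {v | D.Arc (c i) v} ∧
      {v | D.Arc v z} = {v | D.Arc v (c i)}) ∧
    (insert z (c '' {i | ¬ D.Adj z (c i)})).Pairwise (fun a b => ¬ D.Adj a b)

/-!
All four digraphs lie between `D₅` and the digraph `L1Top` obtained from `D₅` by adding both
arcs `x₁x₃` and `x₃x₁`. Being strong, the degree bounds and containing the cycle `x₁x₂x₃x`
pass from `D₅` to every superdigraph, and non-Hamiltonicity passes from `L1Top` to every
subdigraph.
-/

namespace Dgr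

variable {V : Type*} {D E : Dgr V}

theorem Strong.mono (hDE : D.Arc ≤ E.Arc) (hD : D.Strong) : E.Strong :=
  fun u v huv => Relation.TransGen.mono hDE _ _ (hD u v huv)

theorem outDeg_mono [Finite V] (hDE : D.Arc ≤ E.Arc) (u : V) : D.outDeg u ≤ E.outDeg u :=
  Set.ncard_le_ncard (fun v hv => hDE u v hv) (Set.toFinite _)

theorem inDeg_mono [Finite V] (hDE : D.Arc ≤ E.Arc) (u : V) : D.inDeg u ≤ E.inDeg u :=
  Set.ncard_le_ncard (fun v hv => hDE v u hv) (Set.toFinite _)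

theorem IsCycle.mono {k : ℕ} {c : ZMod k → V} (hDE : D.Arc ≤ E.Arc) (hc : D.IsCycle c) :
    E.IsCycle c :=
  ⟨hc.1, hc.2.1, fun i => hDE _ _ (hc.2.2 i)⟩

theorem Hamiltonian.mono [Fintype V] (hDE : D.Arc ≤ E.Arc) (hD : D.Hamiltonian) :
    E.Hamiltonian :=
  let ⟨c, hc, hsurj⟩ := hD
  ⟨c, hc.mono hDE, hsurj⟩

theorem outDeg_eq_card_filter [Fintype V] [DecidableRel D.Arc] (u : V) :
    D.outDeg u = (Finset.univ.filter (D.Arc u)).card := by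
  rw [outDeg, ← Set.ncard_coe_finset, Finset.coe_filter_univ]

theorem inDeg_eq_card_filter [Fintype V] [DecidableRel D.Arc] (u : V) :
    D.inDeg u = (Finset.univ.filter (D.Arc · u)).card := by
  rw [inDeg, ← Set.ncard_coe_finset, Finset.coe_filter_univ]

theorem strong_of_closedWalk {k : ℕ} [NeZero k] (w : ZMod k → V)
    (hw : ∀ i, D.Arc (w i) (w (i + 1))) (hsurj : Function.Surjective w) : D.Strong := by
  have reach : ∀ i (n : ℕ), Relation.ReflTransGen D.Arc (w i) (w (i + n)) := by
    intro i n
    induction n with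
    | zero => simpa using Relation.ReflTransGen.refl
    | succ n ih => exact ih.tail (by simpa [add_assoc] using hw (i + n))
  intro u v huv
  obtain ⟨i, rfl⟩ := hsurj u
  obtain ⟨j, rfl⟩ := hsurj v
  have hij := reach i (j - i).val
  rw [ZMod.natCast_zmod_val, add_sub_cancel] at hij
  exact (Relation.reflTransGen_iff_eq_or_transGen.mp hij).resolve_left (Ne.symm huv)

theorem Hamiltonian.exists_cycle_start [Fintype V] (hD : D.Hamiltonian) (v : V) :
    ∃ c : ZMod (Fintype.card V) → V, D.IsCycle c ∧ c 0 = v := by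
  obtain ⟨c, ⟨hk, hinj, harc⟩, hsurj⟩ := hD
  obtain ⟨j, rfl⟩ := hsurj v
  refine ⟨fun i => c (j + i), ⟨hk, hinj.comp (add_right_injective j), fun i => ?_⟩, by simp⟩
  simpa [add_assoc] using harc (j + i)

end Dgr

instance ofList.decidableArc {V : Type*} [DecidableEq V] (l : List (V × V))
    (h : ∀ v : V, (v, v) ∉ l) : DecidableRel (ofList l h).Arc :=
  fun a b => inferInstanceAs (Decidable ((a, b) ∈ l))

theorem ofList_arc_mono {V : Type*} [DecidableEq V] {l l' : List (V × V)}
    {h : ∀ v : V, (v, v) ∉ l} {h' : ∀ v : V, (v, v) ∉ l'} (hl : l ⊆ l') :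
    (ofList l h).Arc ≤ (ofList l' h').Arc :=
  fun _ _ hab => hl hab

theorem not_hamiltonian_of_fin_five (D : Dgr (Fin 5))
    (h : ∀ a b c d : Fin 5, [0, a, b, c, d].Nodup →
      ¬ (D.Arc 0 a ∧ D.Arc a b ∧ D.Arc b c ∧ D.Arc c d ∧ D.Arc d 0)) :
    ¬ D.Hamiltonian := by
  intro hD
  obtain ⟨c, ⟨-, hinj, harc⟩, hc0⟩ := hD.exists_cycle_start 0
  have hnodup : [c 0, c 1, c 2, c 3, c 4].Nodup := by
    simp only [List.nodup_cons, List.mem_cons, List.not_mem_nil, hinj.eq_iff]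
    decide
  rw [hc0] at hnodup
  have h40 : (4 + 1 : ZMod (Fintype.card (Fin 5))) = 0 := rfl
  refine h _ _ _ _ hnodup ⟨?_, harc 1, harc 2, harc 3, ?_⟩
  · simpa [hc0] using harc 0
  · simpa [hc0, h40] using harc 4

instance : DecidableRel D5.Arc := ofList.decidableArc _ _

def D5closedWalk : ZMod 6 → Fin 5 := ![0, 1, 2, 3, 0, 4]

theorem D5_strong : D5.Strong :=
  Dgr.strong_of_closedWalk D5closedWalk (by decide) (by decide)

theorem D5_outDeg (v : Fin 5) : D5.outDeg v = 2 := by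
  rw [Dgr.outDeg_eq_card_filter]
  revert v
  decide

theorem D5_inDeg (v : Fin 5) : D5.inDeg v = 2 := by
  rw [Dgr.inDeg_eq_card_filter]
  revert v
  decide

def D5cycle : ZMod 4 → Fin 5 := ![0, 1, 2, 3]

theorem D5_isCycle : D5.IsCycle D5cycle :=
  ⟨by norm_num, by decide, by decide⟩

def L1Top : Dgr (Fin 5) := ofList ((0, 2) :: (2, 0) :: D5arcs) (by decide)

instance : DecidableRel L1Top.Arc := ofList.decidableArc _ _

-- On a Hamiltonian cycle `y` sits between `x₁` and `x₃`, so `x₂` and `x` form a segment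
-- leaving and re-entering `{x₁, x₃}`; the only such paths are `x₁x₂xx₁` and `x₃xx₂x₃`.
theorem L1Top_not_hamiltonian : ¬ L1Top.Hamiltonian :=
  not_hamiltonian_of_fin_five _ (by decide)

theorem arc_bounds_of_mem {E : Dgr (Fin 5)} (hE : E ∈ insert D5 L1) :
    D5.Arc ≤ E.Arc ∧ E.Arc ≤ L1Top.Arc := by
  simp only [Set.mem_insert_iff, L1, Set.mem_singleton_iff] at hE
  rcases hE with rfl | rfl | rfl | rfl <;>
    exact ⟨ofList_arc_mono (by decide), ofList_arc_mono (by decide)⟩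

/-- The digraph `D₅` and each of the three digraphs in `L₁` is a strong digraph of
order `5` in which every vertex has out-degree `≥ 2` and in-degree `≥ 2` (so every
vertex is a `T`-vertex with `m = 2`), and each contains a cycle of length `4`; yet
none of them has a Hamiltonian cycle. -/
theorem statement16 :
    ∀ E ∈ insert D5 L1,
      E.Strong ∧ Fintype.card (Fin 5) = 5 ∧
      (∀ v : Fin 5, 2 ≤ E.outDeg v ∧ 2 ≤ E.inDeg v) ∧
      (∀ v : Fin 5, E.TVertex 2 v) ∧
      (∃ c : ZMod 4 → Fin 5, E.IsCycle c) ∧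
      ¬ E.Hamiltonian := by
  intro E hE
  obtain ⟨hlo, hhi⟩ := arc_bounds_of_mem hE
  have hdeg (v : Fin 5) : 2 ≤ E.outDeg v ∧ 2 ≤ E.inDeg v :=
    ⟨D5_outDeg v ▸ Dgr.outDeg_mono hlo v, D5_inDeg v ▸ Dgr.inDeg_mono hlo v⟩
  exact ⟨D5_strong.mono hlo, rfl, hdeg, hdeg, ⟨_, D5_isCycle.mono hlo⟩,
    fun hH => L1Top_not_hamiltonian (hH.mono hhi)⟩
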